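/- The differentiation matrix D satisfies the skew-symmetry-type identity W D + D^T W = e_N e_N^T − e_1 e_1^T, where e_1 and e_N are the first and last columns of the N×N identity matrix; equivalently, D = −W^{−1} D^T W − (e_1 e_1^T)/w_1 + (e_N e_N^T)/w_N. -/

import Mathlib

/-
For `p = Lᵢ Lⱼ` the derivative `p'` has degree `2N - 3`, so the quadrature rule integrates it
exactly. At the nodes `p'(τₖ) = Lᵢ'(τₖ) δⱼₖ + δᵢₖ Lⱼ'(τₖ)`, so the quadrature sum is
`wᵢ Dᵢⱼ + wⱼ Dⱼᵢ = (W D + Dᵀ W)ᵢⱼ`, while by the fundamental theorem of calculus the integral is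
`p(1) - p(-1) = δᵢN δⱼN - δᵢ₁ δⱼ₁`.
-/

open Polynomial

/-- `lagL τ i` is the `i`-th Lagrange basis polynomial (of degree `N - 1`)
for the nodes `τ 0, …, τ (N-1)`, satisfying `(lagL τ i).eval (τ j) = δᵢⱼ`. -/
noncomputable def lagL {N : ℕ} (τ : Fin N → ℝ) (i : Fin N) : ℝ[X] :=
  Lagrange.basis Finset.univ τ i

/-- `lagLp τ` is the polynomial `L_p(x) = ∏ᵢ (x - τᵢ)`. -/
noncomputable def lagLp {N : ℕ} (τ : Fin N → ℝ) : ℝ[X] :=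
  ∏ i, (X - C (τ i))

/-- The differentiation matrix `D`, with `D i j = L_j'(τ i)`. -/
noncomputable def matD {N : ℕ} (τ : Fin N → ℝ) : Matrix (Fin N) (Fin N) ℝ :=
  fun i j => (derivative (lagL τ j)).eval (τ i)

/-- The vector `D_p`, with `(D_p) i = L_p'(τ i)`. -/
noncomputable def vecDp {N : ℕ} (τ : Fin N → ℝ) : Fin N → ℝ :=
  fun i => (derivative (lagLp τ)).eval (τ i)

/-- Columns `2, …, N+1` (in 1-based numbering) of the augmented differentiation
matrix `D̃ = [D  D_p]`: column `j` (0-based, `j < N - 1`) is column `j + 1` of `D`,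
and the last column is `D_p`. -/
noncomputable def matDtil2 {N : ℕ} (τ : Fin N → ℝ) : Matrix (Fin N) (Fin N) ℝ :=
  fun i j => if h : (j : ℕ) + 1 < N then matD τ i ⟨(j : ℕ) + 1, h⟩ else vecDp τ i

/-- The quadrature rule with nodes `τ` and weights `w` integrates exactly all
polynomials of degree at most `2 * N - 3` over `[-1, 1]`. -/
def IsQuadrature {N : ℕ} (τ : Fin N → ℝ) (w : Fin N → ℝ) : Prop :=
  ∀ p : ℝ[X], p.natDegree ≤ 2 * N - 3 →
    ∑ i, w i * p.eval (τ i) = ∫ t in (-1 : ℝ)..1, p.eval t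

/-- The integration matrix `A` with rows indexed (0-based) by `i : Fin (N-1)`
corresponding to the node `τ (i+1)`: `A i j = ∫_{-1}^{τ (i+1)} L_j(t) dt`. -/
noncomputable def matA {N : ℕ} (τ : Fin N → ℝ) : Matrix (Fin (N - 1)) (Fin N) ℝ :=
  fun i j => ∫ t in (-1 : ℝ)..(τ ⟨(i : ℕ) + 1, by have := i.isLt; omega⟩), (lagL τ j).eval t

/-- The row vector `A_p`, with `(A_p) j = (1/N) ∏_{k ≠ j} 1 / (τ j - τ k)`. -/
noncomputable def rowAp {N : ℕ} (τ : Fin N → ℝ) : Fin N → ℝ :=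
  fun j => (1 / (N : ℝ)) * ∏ k ∈ Finset.univ.erase j, (τ j - τ k)⁻¹

/-- The matrix `Ã` obtained by stacking `A` on top of the row vector `A_p`. -/
noncomputable def matAtil {N : ℕ} (τ : Fin N → ℝ) : Matrix (Fin N) (Fin N) ℝ :=
  fun i j => if h : (i : ℕ) + 1 < N then matA τ ⟨(i : ℕ), by omega⟩ j else rowAp τ j

/-- The adjoint integration matrix `A† = W⁻¹ Aᵀ W_{2:N}`, with columns indexed
(0-based) by `j : Fin (N-1)` corresponding to the node `τ (j+1)`. -/
noncomputable def matAdag {N : ℕ} (τ : Fin N → ℝ) (w : Fin N → ℝ) :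
    Matrix (Fin N) (Fin (N - 1)) ℝ :=
  fun i j => (w i)⁻¹ * matA τ j i * w ⟨(j : ℕ) + 1, by have := j.isLt; omega⟩

/-- `polyM τ k` is the Lagrange basis polynomial (of degree `N - 3`) for the
interior nodes `τ 1, …, τ (N-2)`, satisfying `(polyM τ k).eval (τ m) = δₖₘ`
for interior indices `m`. -/
noncomputable def polyM {N : ℕ} (τ : Fin N → ℝ) (k : Fin N) : ℝ[X] :=
  Lagrange.basis (Finset.univ.filter fun m : Fin N => 0 < (m : ℕ) ∧ (m : ℕ) < N - 1) τ k

/-- The polynomial `λ(x) = ∑ᵢ (A† r)ᵢ Lᵢ(x)`. -/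
noncomputable def lamP {N : ℕ} (τ : Fin N → ℝ) (w : Fin N → ℝ) (r : Fin (N - 1) → ℝ) : ℝ[X] :=
  ∑ i, C ((matAdag τ w).mulVec r i) * lagL τ i

theorem intervalIntegral_eval_derivative (p : ℝ[X]) (a b : ℝ) :
    ∫ t in a..b, (derivative p).eval t = p.eval b - p.eval a :=
  intervalIntegral.integral_eq_sub_of_hasDerivAt (fun x _ => p.hasDerivAt x)
    ((Polynomial.continuous _).intervalIntegrable _ _)

section Lagrange

variable {N : ℕ} {τ : Fin N → ℝ}

theorem eval_lagL_node (hτ : Function.Injective τ) (i j : Fin N) :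
    (lagL τ i).eval (τ j) = if i = j then 1 else 0 := by
  split_ifs with h
  · subst h
    exact Lagrange.eval_basis_self hτ.injOn (Finset.mem_univ i)
  · exact Lagrange.eval_basis_of_ne h (Finset.mem_univ j)

theorem natDegree_lagL (hτ : Function.Injective τ) (i : Fin N) :
    (lagL τ i).natDegree = N - 1 := by
  rw [lagL, Lagrange.natDegree_basis hτ.injOn (Finset.mem_univ i), Finset.card_univ,
    Fintype.card_fin]

theorem natDegree_derivative_lagL_mul_lagL_le (hτ : Function.Injective τ) (i j : Fin N) :
    (derivative (lagL τ i * lagL τ j)).natDegree ≤ 2 * N - 3 := by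
  have hprod : (lagL τ i * lagL τ j).natDegree ≤ 2 * N - 2 := by
    have := natDegree_mul_le (p := lagL τ i) (q := lagL τ j)
    rw [natDegree_lagL hτ, natDegree_lagL hτ] at this
    omega
  have := (lagL τ i * lagL τ j).natDegree_derivative_le
  omega

theorem eval_lagL_mul_lagL_node (hτ : Function.Injective τ) (i j k : Fin N) :
    (lagL τ i * lagL τ j).eval (τ k) = Matrix.single k k (1 : ℝ) i j := by
  rw [eval_mul, eval_lagL_node hτ, eval_lagL_node hτ, Matrix.single_apply]
  by_cases hi : i = k <;> by_cases hj : j = k <;> simp [hi, hj, eq_comm]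

theorem sum_mul_eval_derivative_lagL_mul_lagL (hτ : Function.Injective τ) (w : Fin N → ℝ)
    (i j : Fin N) :
    ∑ k, w k * (derivative (lagL τ i * lagL τ j)).eval (τ k) =
      w i * matD τ i j + w j * matD τ j i := by
  simp only [derivative_mul, eval_add, eval_mul, eval_lagL_node hτ, mul_add, mul_ite, ite_mul,
    mul_one, mul_zero, one_mul, zero_mul, Finset.sum_add_distrib, Finset.sum_ite_eq,
    Finset.mem_univ, if_true, matD]
  ring

end Lagrange

/-- The skew-symmetry-type identity `W D + Dᵀ W = e_N e_Nᵀ - e₁ e₁ᵀ`. -/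
theorem stmt15 (N : ℕ) (hN : 3 ≤ N) (τ : Fin N → ℝ) (hmono : StrictMono τ)
    (h0 : τ ⟨0, by omega⟩ = -1) (h1 : τ ⟨N - 1, by omega⟩ = 1) (w : Fin N → ℝ) (hquad : IsQuadrature τ w) :
    Matrix.diagonal w * matD τ + (matD τ).transpose * Matrix.diagonal w =
      Matrix.single ⟨N - 1, by omega⟩ ⟨N - 1, by omega⟩ (1 : ℝ)
        - Matrix.single ⟨0, by omega⟩ ⟨0, by omega⟩ (1 : ℝ) := by
  have hτ := hmono.injective
  ext i j
  calc (Matrix.diagonal w * matD τ + (matD τ).transpose * Matrix.diagonal w) i j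
      = w i * matD τ i j + w j * matD τ j i := by
        simp only [Matrix.add_apply, Matrix.diagonal_mul, Matrix.mul_diagonal,
          Matrix.transpose_apply, mul_comm (matD τ j i)]
    _ = ∑ k, w k * (derivative (lagL τ i * lagL τ j)).eval (τ k) :=
        (sum_mul_eval_derivative_lagL_mul_lagL hτ w i j).symm
    _ = ∫ t in (-1 : ℝ)..1, (derivative (lagL τ i * lagL τ j)).eval t :=
        hquad _ (natDegree_derivative_lagL_mul_lagL_le hτ i j)
    _ = _ := by
        rw [intervalIntegral_eval_derivative, Matrix.sub_apply, ← eval_lagL_mul_lagL_node hτ,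
          ← eval_lagL_mul_lagL_node hτ, h0, h1]
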